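/- With U₃ as defined (the 3×3 matrix with rows ((1/2)e^{iπ/9}, -i/2, 1/√2), ((√3/2)e^{2iπ/9}, (i/(2√3))e^{iπ/9}, -(1/√6)e^{iπ/9}), (0, √(2/3)e^{-2iπ/9}, -(i/√3)e^{-2iπ/9})) and v₀=(1,0,0), v₁=((1/2)e^{iπ/9},(√3/2)e^{2iπ/9},0), v₂=((1/2)e^{-iπ/9}, i/2, 1/√2), we have U₃v₀ = v₁, U₃v₁ = v₂, and U₃v₂ = v₀. -/

import Mathlib

open Matrix Complex

noncomputable def U₃ : Matrix (Fin 3) (Fin 3) ℂ :=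
  !![(1 / 2 : ℂ) * Complex.exp (Real.pi * Complex.I / 9),
       -Complex.I / 2,
       ((Real.sqrt 2 : ℂ))⁻¹;
     ((Real.sqrt 3 : ℂ) / 2) * Complex.exp (2 * Real.pi * Complex.I / 9),
       (Complex.I / (2 * (Real.sqrt 3 : ℂ))) * Complex.exp (Real.pi * Complex.I / 9),
       -((Real.sqrt 6 : ℂ))⁻¹ * Complex.exp (Real.pi * Complex.I / 9);
     0,
       (Real.sqrt (2 / 3) : ℂ) * Complex.exp (-(2 * Real.pi * Complex.I / 9)),
       -(Complex.I / (Real.sqrt 3 : ℂ)) * Complex.exp (-(2 * Real.pi * Complex.I / 9))]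

noncomputable def v₀ : Fin 3 → ℂ := ![1, 0, 0]
noncomputable def v₁ : Fin 3 → ℂ :=
  ![(1 / 2 : ℂ) * Complex.exp (Real.pi * Complex.I / 9),
    ((Real.sqrt 3 : ℂ) / 2) * Complex.exp (2 * Real.pi * Complex.I / 9), 0]
noncomputable def v₂ : Fin 3 → ℂ :=
  ![(1 / 2 : ℂ) * Complex.exp (-(Real.pi * Complex.I / 9)),
    Complex.I / 2, ((Real.sqrt 2 : ℂ))⁻¹]

/-
Write ω = exp(πi/9). Apart from powers of ω, every entry of U₃, v₀, v₁, v₂ lies in ℚ(√2, √3, i).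
In U₃ v₀ and U₃ v₂ each coordinate is a single power of ω times an identity in ℚ(√2, √3, i).
The only relation of ω that is needed is ω³ = exp(πi/3) = (1 + √3 i)/2, which turns the first
two coordinates of U₃ v₁, namely ω²(1 - √3 i)/4 and ω³(√3 + i)/4, into 1/(2ω) and i/2.
-/open scoped Real

local notation "ω" => Complex.exp (π * I / 9)

@[simp]
lemma ofReal_sqrt_ofNat_sq (n : ℕ) [n.AtLeastTwo] :
    ((√(ofNat(n)) : ℝ) : ℂ) ^ 2 = ofNat(n) := by
  rw [← ofReal_pow, Real.sq_sqrt (Nat.ofNat_nonneg n)]; norm_cast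

lemma ofReal_sqrt_six : ((√6 : ℝ) : ℂ) = √2 * √3 := by
  rw [← ofReal_mul, ← Real.sqrt_mul zero_le_two]; norm_num

lemma exp_two_pi_I_div_nine : exp (2 * π * I / 9) = ω ^ 2 := by
  rw [← exp_nat_mul]; ring_nf

lemma exp_pi_I_div_nine_pow_three : ω ^ 3 = (1 + √3 * I) / 2 := by
  have : (3 : ℕ) * (π * I / 9) = (π / 3 : ℝ) * I := by push_cast; ring
  rw [← exp_nat_mul, this, exp_mul_I, ← ofReal_cos, ← ofReal_sin,
    Real.cos_pi_div_three, Real.sin_pi_div_three]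
  push_cast; ring

lemma mulVec_fin_three {R : Type*} [NonUnitalNonAssocSemiring R] (a b c d e f g h k x y z : R) :
    !![a, b, c; d, e, f; g, h, k] *ᵥ ![x, y, z] =
      ![a * x + b * y + c * z, d * x + e * y + f * z, g * x + h * y + k * z] := by
  ext i; fin_cases i <;> simp [mulVec, add_assoc]

lemma U₃_mulVec_v₀ : U₃ *ᵥ v₀ = v₁ := by
  rw [U₃, v₀, v₁, mulVec_fin_three]
  simp [exp_two_pi_I_div_nine]

lemma U₃_mulVec_v₁ : U₃ *ᵥ v₁ = v₂ := by
  rw [U₃, v₁, v₂, mulVec_fin_three]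
  simp only [exp_two_pi_I_div_nine, exp_neg, Real.sqrt_div' _ zero_le_three, ofReal_div,
    mul_zero, add_zero]
  refine vec3_eq ?_ ?_ ?_ <;> field_simp
  · rw [exp_pi_I_div_nine_pow_three]; ring_nf; norm_num
  · rw [exp_pi_I_div_nine_pow_three]; ring_nf; norm_num; ring
  · ring_nf; norm_num

lemma U₃_mulVec_v₂ : U₃ *ᵥ v₂ = v₀ := by
  rw [U₃, v₀, v₂, mulVec_fin_three]
  simp only [exp_two_pi_I_div_nine, exp_neg, Real.sqrt_div' _ zero_le_three, ofReal_div,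
    ofReal_sqrt_six]
  refine vec3_eq ?_ ?_ ?_ <;> field_simp <;> ring_nf <;> norm_num <;> ring

theorem stmt14 :
    U₃.mulVec v₀ = v₁ ∧ U₃.mulVec v₁ = v₂ ∧ U₃.mulVec v₂ = v₀ :=
  ⟨U₃_mulVec_v₀, U₃_mulVec_v₁, U₃_mulVec_v₂⟩
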